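/- arXiv:2407.20575 — 3 statements merged into one kernel-verified Lean document; each statement's English description precedes it below -/
import Mathlib

section
/- Let c_1, c_2 be colorings of the facets of a simple n-polytope P with C(P,c_2) ⊂ C(P,c_1) a subcomplex. Then C(P,c_2) is Hamiltonian in C(P,c_1) if and only if any two defining (n−2)-faces are disjoint, where a defining (n−2)-face is a connected component of a nonempty intersection G_i ∩ G_j of two facets of C(P,c_1) having the same c_2-color. -/
open Set

/-- The face complex `C(P,c)` cut out on the boundary `X ≅ ∂P` of a simple `n`-polytope by a
family of closed connected "facets" `G i` covering `X`, intersecting locally like coordinate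
hyperplanes in `ℝ^l_≥ × ℝ^{n-l}` (cf. Lemma 2.10 of the paper). -/
structure BoundaryComplex (n : ℕ) (X : Type) [TopologicalSpace X] (ι : Type) [Fintype ι] where
  G : ι → Set X
  closed : ∀ i, IsClosed (G i)
  nonempty : ∀ i, (G i).Nonempty
  connected : ∀ i, IsPreconnected (G i)
  cover : (⋃ i, G i) = Set.univ
  localModel : ∀ p : X, ∃ (l : ℕ) (_ : l ≤ n) (ind : Fin l → ι),
    Function.Injective ind ∧ {i | p ∈ G i} = Set.range ind ∧
    ∃ (U : Set X) (V W : Set (Fin n → ℝ)), IsOpen U ∧ p ∈ U ∧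
      (∀ j, j ∉ Set.range ind → U ∩ G j = ∅) ∧ IsOpen W ∧
      V = W ∩ {y | ∀ s : Fin n, (s : ℕ) < l → 0 ≤ y s} ∧
      ∃ e : ↥U ≃ₜ ↥V, ∀ (x : ↥U) (s : Fin n) (hs : (s : ℕ) < l),
        ((x : X) ∈ G (ind ⟨s, hs⟩) ↔ (e x : Fin n → ℝ) s = 0)

variable {n : ℕ} {X : Type} [TopologicalSpace X] {ι ι₁ ι₂ : Type} [Fintype ι] [Fintype ι₁]
  [Fintype ι₂]

/-- The `q`-skeleton of a boundary complex: points lying in at least `n - q` of its facets. -/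
def BoundaryComplex.skel (C : BoundaryComplex n X ι) (q : ℕ) : Set X :=
  {p | n - q ≤ {i | p ∈ C.G i}.ncard}

/-- `C₂` is the subcomplex of `C₁` obtained by merging facets along `σ`: each facet of `C₂` is
the union of the facets of `C₁` mapping to it. -/
def IsSubcomplexVia (C₁ : BoundaryComplex n X ι₁) (C₂ : BoundaryComplex n X ι₂)
    (σ : ι₁ → ι₂) : Prop :=
  ∀ j, C₂.G j = ⋃ i ∈ σ ⁻¹' {j}, C₁.G i

/-- The subcomplex is Hamiltonian if each `q`-skeleton of the big complex is contained in the
`(q+1)`-skeleton of the subcomplex. -/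
def IsHamiltonian (C₁ : BoundaryComplex n X ι₁) (C₂ : BoundaryComplex n X ι₂) : Prop :=
  ∀ q : ℕ, C₁.skel q ⊆ C₂.skel (q + 1)

/-- Defining `(n-2)`-faces of a subcomplex: connected components of nonempty intersections of
two distinct facets of `C₁` lying in the same facet of the subcomplex (equal `σ`-image). -/
def definingFaces (C₁ : BoundaryComplex n X ι₁) (σ : ι₁ → ι₂) : Set (Set X) :=
  {D | ∃ i j, i ≠ j ∧ σ i = σ j ∧
    ∃ x ∈ C₁.G i ∩ C₁.G j, D = connectedComponentIn (C₁.G i ∩ C₁.G j) x}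

/-- The model domain `S^n_{k,≥0} = {x ∈ S^n : x_1 ≥ 0, …, x_k ≥ 0}`. -/
def stdDomain (n k : ℕ) : Set (EuclideanSpace ℝ (Fin (n + 1))) :=
  {x | ‖x‖ = 1 ∧ ∀ i : Fin (n + 1), (i : ℕ) < k → 0 ≤ x i}

/-- The `i`-th facet of the standard complex `C(n,k)`. -/
def stdFacet (n k : ℕ) (i : Fin k) : Set (EuclideanSpace ℝ (Fin (n + 1))) :=
  {x ∈ stdDomain n k | ∀ j : Fin (n + 1), (j : ℕ) = (i : ℕ) → x j = 0}

/-- The ambient space of the standard complex `C(n,k)`: the union of its facets. -/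
def stdSpace (n k : ℕ) : Set (EuclideanSpace ℝ (Fin (n + 1))) := ⋃ i : Fin k, stdFacet n k i

/-- A boundary complex with `k` facets is equivalent to the standard complex `C(n,k)` if a
homeomorphism of the ambient space with the standard space matches facets with standard
facets. -/
def IsStdComplex {k : ℕ} (C : BoundaryComplex n X (Fin k)) : Prop :=
  ∃ (ψ : X ≃ₜ ↥(stdSpace n k)) (β : Fin k ≃ Fin k),
    ∀ (j : Fin k) (x : X),
      ((ψ x : EuclideanSpace ℝ (Fin (n + 1))) ∈ stdFacet n k (β j)) ↔ x ∈ C.G j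


section Aux

set_option linter.unusedSectionVars false

variable {α β : Type*} [DecidableEq β]

lemma card_le_sum_of_one_le (s : Finset β) (f : β → ℕ) (h : ∀ v ∈ s, 1 ≤ f v) :
    s.card ≤ ∑ v ∈ s, f v := by
  simpa using Finset.card_nsmul_le_sum s f 1 h

lemma card_le_of_no_config (S : Finset α) (σ : α → β)
    (h3 : ¬ ∃ i₁ ∈ S, ∃ i₂ ∈ S, ∃ i₃ ∈ S, i₁ ≠ i₂ ∧ i₁ ≠ i₃ ∧ i₂ ≠ i₃ ∧ σ i₁ = σ i₂ ∧ σ i₁ = σ i₃)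
    (h22 : ¬ ∃ i₁ ∈ S, ∃ i₂ ∈ S, ∃ i₃ ∈ S, ∃ i₄ ∈ S,
      i₁ ≠ i₂ ∧ i₃ ≠ i₄ ∧ σ i₁ = σ i₂ ∧ σ i₃ = σ i₄ ∧ σ i₁ ≠ σ i₃) :
    S.card ≤ (S.image σ).card + 1 := by
  classical
  set T := S.image σ with hT
  set f : β → ℕ := fun v => (S.filter (fun i => σ i = v)).card with hf
  have hsum : S.card = ∑ v ∈ T, f v :=
    Finset.card_eq_sum_card_fiberwise (fun x hx => Finset.mem_image_of_mem σ hx)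
  have hle2 : ∀ v, f v ≤ 2 := by
    intro v
    by_contra hv
    push_neg at hv
    obtain ⟨a, ha, b, hb, c, hc, hab, hac, hbc⟩ := Finset.two_lt_card.mp hv
    simp only [Finset.mem_filter] at ha hb hc
    exact h3 ⟨a, ha.1, b, hb.1, c, hc.1, hab, hac, hbc, ha.2.trans hb.2.symm, ha.2.trans hc.2.symm⟩
  set B := T.filter (fun v => 2 ≤ f v) with hB
  have hB1 : B.card ≤ 1 := by
    by_contra hb
    push_neg at hb
    obtain ⟨v, hv, w, hw, hvw⟩ := Finset.one_lt_card.mp hb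
    simp only [hB, Finset.mem_filter] at hv hw
    obtain ⟨a, ha, b, hb', hab⟩ := Finset.one_lt_card.mp hv.2
    obtain ⟨c, hc, d, hd, hcd⟩ := Finset.one_lt_card.mp hw.2
    simp only [Finset.mem_filter] at ha hb' hc hd
    exact h22 ⟨a, ha.1, b, hb'.1, c, hc.1, d, hd.1, hab, hcd,
      ha.2.trans hb'.2.symm, hc.2.trans hd.2.symm, by rw [ha.2, hc.2]; exact hvw⟩
  have hsplit : ∑ v ∈ B, f v + ∑ v ∈ T.filter (fun v => ¬ 2 ≤ f v), f v = ∑ v ∈ T, f v :=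
    Finset.sum_filter_add_sum_filter_not T _ f
  have h1 : ∑ v ∈ B, f v ≤ 2 * B.card := by
    calc ∑ v ∈ B, f v ≤ ∑ v ∈ B, 2 := Finset.sum_le_sum (fun v _ => hle2 v)
    _ = 2 * B.card := by rw [Finset.sum_const, smul_eq_mul, mul_comm]
  have h2 : ∑ v ∈ T.filter (fun v => ¬ 2 ≤ f v), f v ≤ (T.filter (fun v => ¬ 2 ≤ f v)).card := by
    calc ∑ v ∈ T.filter (fun v => ¬ 2 ≤ f v), f v
        ≤ ∑ v ∈ T.filter (fun v => ¬ 2 ≤ f v), 1 :=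
          Finset.sum_le_sum (fun v hv => by
            simp only [Finset.mem_filter] at hv; omega)
    _ = _ := by rw [Finset.sum_const, smul_eq_mul, mul_one]
  have hcards : B.card + (T.filter (fun v => ¬ 2 ≤ f v)).card = T.card :=
    Finset.card_filter_add_card_filter_not _
  omega


lemma config3_card (S : Finset α) (σ : α → β) {i₁ i₂ i₃ : α}
    (h1 : i₁ ∈ S) (h2 : i₂ ∈ S) (h3 : i₃ ∈ S)
    (h12 : i₁ ≠ i₂) (h13 : i₁ ≠ i₃) (h23 : i₂ ≠ i₃)
    (e12 : σ i₁ = σ i₂) (e13 : σ i₁ = σ i₃) :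
    (S.image σ).card + 2 ≤ S.card := by
  classical
  set T := S.image σ with hT
  set f : β → ℕ := fun v => (S.filter (fun i => σ i = v)).card with hf
  have hsum : S.card = ∑ v ∈ T, f v :=
    Finset.card_eq_sum_card_fiberwise (fun x hx => Finset.mem_image_of_mem σ hx)
  have hge1 : ∀ v ∈ T, 1 ≤ f v := by
    intro v hv
    obtain ⟨a, ha, rfl⟩ := Finset.mem_image.mp hv
    exact Finset.card_pos.mpr ⟨a, Finset.mem_filter.mpr ⟨ha, rfl⟩⟩
  have hv0 : σ i₁ ∈ T := Finset.mem_image_of_mem σ h1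
  have hf0 : 3 ≤ f (σ i₁) := by
    refine Finset.two_lt_card.mpr ⟨i₁, ?_, i₂, ?_, i₃, ?_, h12, h13, h23⟩ <;>
      simp [Finset.mem_filter, h1, h2, h3, e12.symm, e13.symm]
  have hrest : (T.erase (σ i₁)).card ≤ ∑ v ∈ T.erase (σ i₁), f v :=
    card_le_sum_of_one_le _ _ (fun v hv => hge1 v (Finset.mem_of_mem_erase hv))
  have hsplit : f (σ i₁) + ∑ v ∈ T.erase (σ i₁), f v = ∑ v ∈ T, f v :=
    Finset.add_sum_erase T f hv0
  have hce : (T.erase (σ i₁)).card = T.card - 1 := Finset.card_erase_of_mem hv0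
  have hTpos : 1 ≤ T.card := Finset.card_pos.mpr ⟨_, hv0⟩
  omega

lemma config22_card (S : Finset α) (σ : α → β) {i₁ i₂ i₃ i₄ : α}
    (h1 : i₁ ∈ S) (h2 : i₂ ∈ S) (h3 : i₃ ∈ S) (h4 : i₄ ∈ S)
    (h12 : i₁ ≠ i₂) (h34 : i₃ ≠ i₄)
    (e12 : σ i₁ = σ i₂) (e34 : σ i₃ = σ i₄) (hne : σ i₁ ≠ σ i₃) :
    (S.image σ).card + 2 ≤ S.card := by
  classical
  set T := S.image σ with hT
  set f : β → ℕ := fun v => (S.filter (fun i => σ i = v)).card with hf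
  have hsum : S.card = ∑ v ∈ T, f v :=
    Finset.card_eq_sum_card_fiberwise (fun x hx => Finset.mem_image_of_mem σ hx)
  have hge1 : ∀ v ∈ T, 1 ≤ f v := by
    intro v hv
    obtain ⟨a, ha, rfl⟩ := Finset.mem_image.mp hv
    exact Finset.card_pos.mpr ⟨a, Finset.mem_filter.mpr ⟨ha, rfl⟩⟩
  have hv1 : σ i₁ ∈ T := Finset.mem_image_of_mem σ h1
  have hv3 : σ i₃ ∈ T := Finset.mem_image_of_mem σ h3
  have hv3' : σ i₃ ∈ T.erase (σ i₁) := Finset.mem_erase.mpr ⟨hne.symm, hv3⟩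
  have hf1 : 2 ≤ f (σ i₁) := by
    refine Finset.one_lt_card.mpr ⟨i₁, ?_, i₂, ?_, h12⟩ <;>
      simp [Finset.mem_filter, h1, h2, e12.symm]
  have hf3 : 2 ≤ f (σ i₃) := by
    refine Finset.one_lt_card.mpr ⟨i₃, ?_, i₄, ?_, h34⟩ <;>
      simp [Finset.mem_filter, h3, h4, e34.symm]
  have hrest : ((T.erase (σ i₁)).erase (σ i₃)).card ≤ ∑ v ∈ (T.erase (σ i₁)).erase (σ i₃), f v :=
    card_le_sum_of_one_le _ _ (fun v hv =>
      hge1 v (Finset.mem_of_mem_erase (Finset.mem_of_mem_erase hv)))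
  have hsplit1 : f (σ i₁) + ∑ v ∈ T.erase (σ i₁), f v = ∑ v ∈ T, f v :=
    Finset.add_sum_erase T f hv1
  have hsplit3 : f (σ i₃) + ∑ v ∈ (T.erase (σ i₁)).erase (σ i₃), f v
      = ∑ v ∈ T.erase (σ i₁), f v := Finset.add_sum_erase _ f hv3'
  have hce1 : (T.erase (σ i₁)).card = T.card - 1 := Finset.card_erase_of_mem hv1
  have hce3 : ((T.erase (σ i₁)).erase (σ i₃)).card = (T.erase (σ i₁)).card - 1 :=
    Finset.card_erase_of_mem hv3'
  have hTpos : 1 ≤ (T.erase (σ i₁)).card := Finset.card_pos.mpr ⟨_, hv3'⟩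
  have hT1 : 1 ≤ T.card := Finset.card_pos.mpr ⟨_, hv1⟩
  omega

end Aux

section TopAux

set_option linter.unusedSectionVars false


lemma exists_mem_cc_not_mem (C : BoundaryComplex n X ι) {p : X} {i₁ i₂ i₃ : ι}
    (h13 : i₁ ≠ i₃) (h23 : i₂ ≠ i₃)
    (hp1 : p ∈ C.G i₁) (hp2 : p ∈ C.G i₂) (hp3 : p ∈ C.G i₃) :
    ∃ x ∈ connectedComponentIn (C.G i₁ ∩ C.G i₂) p, x ∉ C.G i₃ := by
  obtain ⟨l, hl, ind, hinj, hset, U, V, W, hUo, hpU, hdis, hWo, hVeq, e, he⟩ := C.localModel p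
  have hmem : ∀ {i : ι}, p ∈ C.G i → i ∈ Set.range ind := fun {i} hi => hset ▸ hi
  obtain ⟨s₁, hs₁⟩ := hmem hp1
  obtain ⟨s₂, hs₂⟩ := hmem hp2
  obtain ⟨s₃, hs₃⟩ := hmem hp3
  -- corresponding Fin n indices
  set t₁ : Fin n := ⟨s₁.1, lt_of_lt_of_le s₁.2 hl⟩ with ht₁
  set t₂ : Fin n := ⟨s₂.1, lt_of_lt_of_le s₂.2 hl⟩ with ht₂
  set t₃ : Fin n := ⟨s₃.1, lt_of_lt_of_le s₃.2 hl⟩ with ht₃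
  have ht₁l : (t₁ : ℕ) < l := s₁.2
  have ht₂l : (t₂ : ℕ) < l := s₂.2
  have ht₃l : (t₃ : ℕ) < l := s₃.2
  have hind₁ : ind ⟨t₁, ht₁l⟩ = i₁ := hs₁
  have hind₂ : ind ⟨t₂, ht₂l⟩ = i₂ := hs₂
  have hind₃ : ind ⟨t₃, ht₃l⟩ = i₃ := hs₃
  have hs13 : s₁ ≠ s₃ := fun h => h13 (by rw [← hs₁, ← hs₃, h])
  have hs23 : s₂ ≠ s₃ := fun h => h23 (by rw [← hs₂, ← hs₃, h])
  have ht13 : t₁ ≠ t₃ := by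
    intro h
    rw [ht₁, ht₃] at h
    simp only [Fin.mk.injEq] at h
    exact hs13 (Fin.ext h)
  have ht23 : t₂ ≠ t₃ := by
    intro h
    rw [ht₂, ht₃] at h
    simp only [Fin.mk.injEq] at h
    exact hs23 (Fin.ext h)
  set pU : ↥U := ⟨p, hpU⟩ with hpUdef
  set y₀ : Fin n → ℝ := ((e pU : ↥V) : Fin n → ℝ) with hy₀
  have hy₀V : y₀ ∈ V := (e pU).2
  have hy₀W : y₀ ∈ W := by rw [hVeq] at hy₀V; exact hy₀V.1
  have hy₀pos : ∀ s : Fin n, (s : ℕ) < l → 0 ≤ y₀ s := by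
    rw [hVeq] at hy₀V; exact hy₀V.2
  have hz : ∀ (t : Fin n) (htl : (t : ℕ) < l), p ∈ C.G (ind ⟨t, htl⟩) → y₀ t = 0 := by
    intro t htl hp'
    exact (he pU t htl).mp hp'
  have hz₁ : y₀ t₁ = 0 := hz t₁ ht₁l (hind₁ ▸ hp1)
  have hz₂ : y₀ t₂ = 0 := hz t₂ ht₂l (hind₂ ▸ hp2)
  have hz₃ : y₀ t₃ = 0 := hz t₃ ht₃l (hind₃ ▸ hp3)
  obtain ⟨ε, hε, hball⟩ := Metric.isOpen_iff.mp hWo y₀ hy₀W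
  set δ : ℝ := ε / 2 with hδdef
  have hδ : 0 < δ := by positivity
  set K : Set (Fin n → ℝ) := (fun t : ℝ => Function.update y₀ t₃ t) '' Set.Icc 0 δ with hK
  have hKV : K ⊆ V := by
    rintro _ ⟨t, ⟨ht0, htδ⟩, rfl⟩
    rw [hVeq]
    refine ⟨hball ?_, ?_⟩
    · rw [Metric.mem_ball]
      rw [dist_pi_lt_iff hε]
      intro i
      rcases eq_or_ne i t₃ with rfl | hi
      · simp only [Function.update_self, Real.dist_eq, hz₃, sub_zero]
        rw [abs_of_nonneg ht0]
        calc t ≤ δ := htδ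
        _ < ε := by rw [hδdef]; linarith
      · simp [Function.update_of_ne hi, Real.dist_eq, hε]
    · intro s hs
      rcases eq_or_ne s t₃ with rfl | hi
      · simpa using ht0
      · simpa [Function.update_of_ne hi] using hy₀pos s hs
  have hKconn : IsPreconnected K := by
    apply IsPreconnected.image isPreconnected_Icc
    apply Continuous.continuousOn
    apply continuous_pi
    intro i
    rcases eq_or_ne i t₃ with rfl | hi
    · simpa using continuous_id'
    · simpa [Function.update_of_ne hi] using continuous_const
  haveI : PreconnectedSpace ↥K := Subtype.preconnectedSpace hKconn
  set h : ↥K → X := fun k => ((e.symm ⟨k.1, hKV k.2⟩ : ↥U) : X) with hh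
  have hcont : Continuous h := by
    apply continuous_subtype_val.comp
    exact e.symm.continuous.comp (Continuous.subtype_mk continuous_subtype_val _)
  set A : Set X := Set.range h with hA
  have hAconn : IsPreconnected A := isPreconnected_range hcont
  have hy₀K : y₀ ∈ K := ⟨0, ⟨le_refl 0, hδ.le⟩, by show Function.update y₀ t₃ 0 = y₀; rw [← hz₃, Function.update_eq_self]⟩
  have hpA : p ∈ A := by
    refine ⟨⟨y₀, hy₀K⟩, ?_⟩
    have : (⟨y₀, hKV hy₀K⟩ : ↥V) = e pU := Subtype.ext rfl
    simp only [hh, this, Homeomorph.symm_apply_apply]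
    rfl
  have hcoord : ∀ (k : ↥K) (t : Fin n) (htl : (t : ℕ) < l),
      (h k ∈ C.G (ind ⟨t, htl⟩) ↔ (k : Fin n → ℝ) t = 0) := by
    intro k t htl
    have := he (e.symm ⟨k.1, hKV k.2⟩) t htl
    rwa [Homeomorph.apply_symm_apply] at this
  have hAsub : A ⊆ C.G i₁ ∩ C.G i₂ := by
    rintro _ ⟨k, rfl⟩
    obtain ⟨t, ht, hkt⟩ := k.2
    constructor
    · rw [← hind₁]
      refine (hcoord k t₁ ht₁l).mpr ?_
      simp only [← hkt, Function.update_of_ne ht13]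
      exact hz₁
    · rw [← hind₂]
      refine (hcoord k t₂ ht₂l).mpr ?_
      simp only [← hkt, Function.update_of_ne ht23]
      exact hz₂
  have hAcc : A ⊆ connectedComponentIn (C.G i₁ ∩ C.G i₂) p :=
    hAconn.subset_connectedComponentIn hpA hAsub
  have hkδ : Function.update y₀ t₃ δ ∈ K := ⟨δ, ⟨hδ.le, le_refl δ⟩, rfl⟩
  refine ⟨h ⟨_, hkδ⟩, hAcc ⟨⟨_, hkδ⟩, rfl⟩, ?_⟩
  intro hmem3
  rw [← hind₃] at hmem3
  have := (hcoord ⟨_, hkδ⟩ t₃ ht₃l).mp hmem3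
  simp only [Function.update_self] at this
  exact hδ.ne' this

lemma facets_mem_ncard_le (C : BoundaryComplex n X ι) (p : X) :
    {i | p ∈ C.G i}.ncard ≤ n := by
  obtain ⟨l, hl, ind, hinj, hset, -⟩ := C.localModel p
  rw [hset, ← Set.image_univ, Set.ncard_image_of_injective _ hinj, Set.ncard_univ]
  simpa using hl

lemma mem_G2_eq {C₁ : BoundaryComplex n X ι₁} {C₂ : BoundaryComplex n X ι₂} {σ : ι₁ → ι₂}
    (hsub : IsSubcomplexVia C₁ C₂ σ) (p : X) :
    {j | p ∈ C₂.G j} = σ '' {i | p ∈ C₁.G i} := by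
  ext j
  simp only [Set.mem_setOf_eq, hsub j, Set.mem_iUnion, Set.mem_image, Set.mem_preimage,
    Set.mem_singleton_iff, exists_prop]
  tauto

lemma ham_iff_ncard {C₁ : BoundaryComplex n X ι₁} {C₂ : BoundaryComplex n X ι₂} {σ : ι₁ → ι₂}
    (hsub : IsSubcomplexVia C₁ C₂ σ) :
    IsHamiltonian C₁ C₂ ↔
      ∀ p : X, {i | p ∈ C₁.G i}.ncard ≤ (σ '' {i | p ∈ C₁.G i}).ncard + 1 := by
  constructor
  · intro h p
    have hn := facets_mem_ncard_le C₁ p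
    have h1 : p ∈ C₁.skel (n - {i | p ∈ C₁.G i}.ncard) := by
      simp only [BoundaryComplex.skel, Set.mem_setOf_eq]; omega
    have h2 := h _ h1
    simp only [BoundaryComplex.skel, Set.mem_setOf_eq, mem_G2_eq hsub p] at h2
    omega
  · intro h q p hp
    simp only [BoundaryComplex.skel, Set.mem_setOf_eq] at hp ⊢
    rw [mem_G2_eq hsub p]
    have := h p
    omega

lemma ncard_finset_eq {σ : ι₁ → ι₂} [DecidableEq ι₂] (S : Set ι₁) :
    ∃ F : Finset ι₁, S.ncard = F.card ∧ (σ '' S).ncard = (F.image σ).card ∧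
      ∀ i, i ∈ F ↔ i ∈ S := by
  classical
  have hfin : S.Finite := Set.toFinite S
  refine ⟨hfin.toFinset, Set.ncard_eq_toFinset_card S hfin, ?_, fun i => hfin.mem_toFinset⟩
  have himg : σ '' S = ↑(hfin.toFinset.image σ) := by
    rw [Finset.coe_image, Set.Finite.coe_toFinset]
  rw [himg, Set.ncard_coe_finset]

end TopAux

/-- Proposition 4.6. A subcomplex `C(P,c₂) ⊆ C(P,c₁)` is Hamiltonian if and
only if any two distinct defining `(n-2)`-faces are disjoint. -/
theorem hamiltonian_iff_defining_faces_disjoint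
    (C₁ : BoundaryComplex n X ι₁) (C₂ : BoundaryComplex n X ι₂) (σ : ι₁ → ι₂)
    (hsub : IsSubcomplexVia C₁ C₂ σ) :
    IsHamiltonian C₁ C₂ ↔
      ∀ D₁ ∈ definingFaces C₁ σ, ∀ D₂ ∈ definingFaces C₁ σ, D₁ ≠ D₂ → Disjoint D₁ D₂ := by
  classical
  rw [ham_iff_ncard hsub]
  constructor
  · -- Hamiltonian (in cardinality form) implies defining faces are disjoint
    intro h D₁ hD₁ D₂ hD₂ hne
    rw [Set.disjoint_left]
    intro p hp1 hp2
    obtain ⟨i₁, i₂, h12, e12, x₁, hx₁, rfl⟩ := hD₁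
    obtain ⟨i₃, i₄, h34, e34, x₂, hx₂, rfl⟩ := hD₂
    have hp12 : p ∈ C₁.G i₁ ∩ C₁.G i₂ := connectedComponentIn_subset _ _ hp1
    have hp34 : p ∈ C₁.G i₃ ∩ C₁.G i₄ := connectedComponentIn_subset _ _ hp2
    have hD1 : connectedComponentIn (C₁.G i₁ ∩ C₁.G i₂) x₁
        = connectedComponentIn (C₁.G i₁ ∩ C₁.G i₂) p := connectedComponentIn_eq hp1
    have hD2 : connectedComponentIn (C₁.G i₃ ∩ C₁.G i₄) x₂
        = connectedComponentIn (C₁.G i₃ ∩ C₁.G i₄) p := connectedComponentIn_eq hp2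
    have hpairs : ¬ ((i₃ = i₁ ∧ i₄ = i₂) ∨ (i₃ = i₂ ∧ i₄ = i₁)) := by
      rintro (⟨rfl, rfl⟩ | ⟨rfl, rfl⟩)
      · exact hne (hD1.trans hD2.symm)
      · refine hne ?_
        rw [hD1, hD2, Set.inter_comm]
    obtain ⟨F, hF1, hF2, hFmem⟩ := ncard_finset_eq (σ := σ) {i | p ∈ C₁.G i}
    have hm1 : i₁ ∈ F := (hFmem i₁).mpr hp12.1
    have hm2 : i₂ ∈ F := (hFmem i₂).mpr hp12.2
    have hm3 : i₃ ∈ F := (hFmem i₃).mpr hp34.1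
    have hm4 : i₄ ∈ F := (hFmem i₄).mpr hp34.2
    have hbig : (F.image σ).card + 2 ≤ F.card := by
      by_cases hσ : σ i₁ = σ i₃
      · by_cases h31 : i₃ = i₁
        · have h42 : i₄ ≠ i₂ := fun hh => hpairs (Or.inl ⟨h31, hh⟩)
          have h14 : i₁ ≠ i₄ := fun hh => h34 (h31.trans hh)
          exact config3_card F σ hm1 hm2 hm4 h12 h14 (fun hh => h42 hh.symm) e12
            (hσ.trans e34)
        · by_cases h32 : i₃ = i₂
          · have h41 : i₄ ≠ i₁ := fun hh => hpairs (Or.inr ⟨h32, hh⟩)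
            have h24 : i₂ ≠ i₄ := fun hh => h34 (h32.trans hh)
            exact config3_card F σ hm1 hm2 hm4 h12 (fun hh => h41 hh.symm) h24 e12
              (hσ.trans e34)
          · exact config3_card F σ hm1 hm2 hm3 h12 (fun hh => h31 hh.symm)
              (fun hh => h32 hh.symm) e12 hσ
      · exact config22_card F σ hm1 hm2 hm3 hm4 h12 h34 e12 e34 hσ
    have := h p
    omega
  · -- disjointness of defining faces implies the cardinality bound
    intro hdisj p
    by_contra hcon
    push_neg at hcon
    obtain ⟨F, hF1, hF2, hFmem⟩ := ncard_finset_eq (σ := σ) {i | p ∈ C₁.G i}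
    have hcard : F.card ≤ (F.image σ).card + 1 := by
      apply card_le_of_no_config
      · rintro ⟨i₁, hm1, i₂, hm2, i₃, hm3, h12, h13, h23, e12, e13⟩
        have hp1 : p ∈ C₁.G i₁ := (hFmem i₁).mp hm1
        have hp2 : p ∈ C₁.G i₂ := (hFmem i₂).mp hm2
        have hp3 : p ∈ C₁.G i₃ := (hFmem i₃).mp hm3
        obtain ⟨x, hx, hx3⟩ := exists_mem_cc_not_mem C₁ h13 h23 hp1 hp2 hp3
        have hD₁mem : connectedComponentIn (C₁.G i₁ ∩ C₁.G i₂) p ∈ definingFaces C₁ σ :=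
          ⟨i₁, i₂, h12, e12, p, ⟨hp1, hp2⟩, rfl⟩
        have hD₂mem : connectedComponentIn (C₁.G i₁ ∩ C₁.G i₃) p ∈ definingFaces C₁ σ :=
          ⟨i₁, i₃, h13, e13, p, ⟨hp1, hp3⟩, rfl⟩
        have hDne : connectedComponentIn (C₁.G i₁ ∩ C₁.G i₂) p
            ≠ connectedComponentIn (C₁.G i₁ ∩ C₁.G i₃) p := by
          intro hEq
          exact hx3 (connectedComponentIn_subset _ _ (hEq ▸ hx)).2
        exact Set.disjoint_left.mp (hdisj _ hD₁mem _ hD₂mem hDne)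
          (mem_connectedComponentIn ⟨hp1, hp2⟩) (mem_connectedComponentIn ⟨hp1, hp3⟩)
      · rintro ⟨i₁, hm1, i₂, hm2, i₃, hm3, i₄, hm4, h12, h34, e12, e34, hσ⟩
        have hp1 : p ∈ C₁.G i₁ := (hFmem i₁).mp hm1
        have hp2 : p ∈ C₁.G i₂ := (hFmem i₂).mp hm2
        have hp3 : p ∈ C₁.G i₃ := (hFmem i₃).mp hm3
        have hp4 : p ∈ C₁.G i₄ := (hFmem i₄).mp hm4
        have h13 : i₁ ≠ i₃ := fun hh => hσ (congrArg σ hh)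
        have h23 : i₂ ≠ i₃ := fun hh => hσ (e12.trans (congrArg σ hh))
        obtain ⟨x, hx, hx3⟩ := exists_mem_cc_not_mem C₁ h13 h23 hp1 hp2 hp3
        have hD₁mem : connectedComponentIn (C₁.G i₁ ∩ C₁.G i₂) p ∈ definingFaces C₁ σ :=
          ⟨i₁, i₂, h12, e12, p, ⟨hp1, hp2⟩, rfl⟩
        have hD₂mem : connectedComponentIn (C₁.G i₃ ∩ C₁.G i₄) p ∈ definingFaces C₁ σ :=
          ⟨i₃, i₄, h34, e34, p, ⟨hp3, hp4⟩, rfl⟩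
        have hDne : connectedComponentIn (C₁.G i₁ ∩ C₁.G i₂) p
            ≠ connectedComponentIn (C₁.G i₃ ∩ C₁.G i₄) p := by
          intro hEq
          exact hx3 (connectedComponentIn_subset _ _ (hEq ▸ hx)).1
        exact Set.disjoint_left.mp (hdisj _ hD₁mem _ hD₂mem hDne)
          (mem_connectedComponentIn ⟨hp1, hp2⟩) (mem_connectedComponentIn ⟨hp3, hp4⟩)
    omega
end

section
/- If a simple 4-polytope P admits a Hamiltonian C(4,r)-subcomplex (r ∈ {3,4,5}), then P has at least one 2-face that is a triangle or a quadrangle. -/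
/-- Proposition 4.56. If a simple 4-polytope `P` (with `m` facets, `f₀`
vertices, `f₂` two-faces, `p k` two-faces with `k` edges) admits a Hamiltonian
`C(4,r)`-subcomplex (`r ∈ {3,4,5}`), whose `s = m - r` defining 2-faces are `k_i`-gons
(`K i` edges each, these being among the 2-faces of `P`), and the vertex count
`f₀ = V_{4,r} + Σ K i` holds (`V_{4,3} = 0`, `V_{4,4} = 2`, `V_{4,5} = 5`), then `P` has at
least one triangular or quadrangular 2-face. -/
theorem hamiltonian_subcomplex_forces_triangle_or_quadrangle
    (m r s : ℕ) (hr : r = 3 ∨ r = 4 ∨ r = 5) (hrm : r ≤ m) (hs : s = m - r)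
    (f0 f1 f2 : ℕ) (p : ℕ → ℕ)
    (hfin : (Function.support p).Finite)
    (heuler : f0 + f2 = f1 + m)
    (hsimple : 2 * f1 = 4 * f0)
    (hflag : ∑ᶠ k, k * p k = 6 * f0)
    (hf2 : f2 = ∑ᶠ k, p k)
    (hp : ∀ k < 3, p k = 0)
    (K : Fin s → ℕ) (hK3 : ∀ i, 3 ≤ K i)
    (hvert : f0 = (if r = 3 then 0 else if r = 4 then 2 else 5) + ∑ i, K i)
    (hdom : ∀ j, ({i | K i = j} : Set (Fin s)).ncard ≤ p j) :
    0 < p 3 + p 4 := by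
  by_contra hcon
  push_neg at hcon
  have h3 : p 3 = 0 := by omega
  have h4 : p 4 = 0 := by omega
  set S : Finset ℕ := hfin.toFinset ∪ Finset.image K Finset.univ with hS
  have hsubp : Function.support p ⊆ ↑S := by
    intro k hk
    simp [hS, Set.Finite.mem_toFinset]
    exact Or.inl hk
  have hsum1 : ∑ k ∈ S, k * p k = 6 * f0 := by
    rw [← hflag]
    exact (finsum_eq_finset_sum_of_support_subset _ (by
      intro k hk
      apply hsubp
      simp only [Function.mem_support] at hk ⊢
      exact fun h => hk (by simp [h]))).symm
  have hsum2 : f2 = ∑ k ∈ S, p k := by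
    rw [hf2]
    exact finsum_eq_finset_sum_of_support_subset _ hsubp
  -- fiber cardinalities
  set c : ℕ → ℕ := fun k => (Finset.univ.filter fun i => K i = k).card with hcdef
  have hc : ∀ k, c k ≤ p k := by
    intro k
    have h1 : ({i | K i = k} : Set (Fin s)).ncard = c k := by
      rw [Set.ncard_eq_toFinset_card']
      simp [hcdef]
    rw [← h1]
    exact hdom k
  have hcK : ∀ i : Fin s, 1 ≤ c (K i) := by
    intro i
    have : i ∈ Finset.univ.filter fun j => K j = K i := by simp
    exact Finset.card_pos.mpr ⟨i, this⟩
  have hK5 : ∀ i, 5 ≤ K i := by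
    intro i
    have h1 : 1 ≤ p (K i) := le_trans (hcK i) (hc (K i))
    by_contra hk
    push_neg at hk
    have h30 := hK3 i
    interval_cases h : K i <;> omega
  -- key pointwise inequality
  have hkey : ∀ k ∈ S, 5 * p k + (k - 5) * c k ≤ k * p k := by
    intro k _
    rcases Nat.eq_zero_or_pos (p k) with h0 | hpos
    · have hc0 : c k = 0 := by have := hc k; omega
      simp [h0, hc0]
    · have hk5 : 5 ≤ k := by
        have h0' := hp 0 (by norm_num)
        have h1' := hp 1 (by norm_num)
        have h2' := hp 2 (by norm_num)
        by_contra hk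
        push_neg at hk
        interval_cases k <;> omega
      calc 5 * p k + (k - 5) * c k ≤ 5 * p k + (k - 5) * p k :=
            Nat.add_le_add_left (Nat.mul_le_mul_left _ (hc k)) _
        _ = (5 + (k - 5)) * p k := by rw [Nat.add_mul]
        _ = k * p k := by congr 1; omega
  have hsumle : ∑ k ∈ S, (5 * p k + (k - 5) * c k) ≤ ∑ k ∈ S, k * p k :=
    Finset.sum_le_sum hkey
  -- fiberwise sum
  have hmaps : ∀ i ∈ (Finset.univ : Finset (Fin s)), K i ∈ S := by
    intro i _
    simp [hS]
  have hfiber : ∑ k ∈ S, (k - 5) * c k = ∑ i, (K i - 5) := by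
    rw [← Finset.sum_fiberwise_of_maps_to hmaps (fun i => K i - 5)]
    refine Finset.sum_congr rfl fun k _ => ?_
    rw [Finset.sum_congr rfl (fun i hi => by
      simp only [Finset.mem_filter] at hi
      rw [hi.2]), Finset.sum_const, smul_eq_mul, hcdef, mul_comm]
  have hKsum : ∑ i, (K i - 5) + 5 * s = ∑ i, K i := by
    have : ∀ i : Fin s, K i - 5 + 5 = K i := fun i => by have := hK5 i; omega
    calc ∑ i, (K i - 5) + 5 * s = ∑ i : Fin s, (K i - 5 + 5) := by
          rw [Finset.sum_add_distrib, Finset.sum_const, Finset.card_univ,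
            Fintype.card_fin, smul_eq_mul, mul_comm]
      _ = ∑ i, K i := Finset.sum_congr rfl fun i _ => this i
  have hsplit : ∑ k ∈ S, (5 * p k + (k - 5) * c k)
      = 5 * f2 + ∑ i, (K i - 5) := by
    rw [Finset.sum_add_distrib, ← Finset.mul_sum, ← hsum2, hfiber]
  have hmain : 5 * f2 + ∑ i, (K i - 5) ≤ 6 * f0 := by
    rw [← hsplit, ← hsum1]; exact hsumle
  rcases hr with h | h | h <;> subst h <;> simp at hvert <;> omega
end

section
/- If P = Q × I is a simple 4-polytope (Q a simple 3-polytope) admitting a Hamiltonian C(4,r)-subcomplex with defining 2-faces having k_1,…,k_{m−r} edges, then at least one k_i = 3, i.e., some defining 2-face is a triangle. -/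
/-- Proposition 4.57. If `P = Q × I` is a simple 4-polytope (`Q` a simple
3-polytope with `q ≥ 4` facets, so `m = q + 2` and `f₀(P) = 4(m - 4)`) admitting a Hamiltonian
`C(4,r)`-subcomplex (`r ∈ {3,4,5}`) with `s = m - r` defining 2-faces having `K i ≥ 3` edges
and `f₀ = V_{4,r} + Σ K i` (`V_{4,3} = 0`, `V_{4,4} = 2`, `V_{4,5} = 5`), then some defining
2-face is a triangle. -/
theorem prism_hamiltonian_subcomplex_has_triangular_defining_face
    (q m r s : ℕ) (hq : 4 ≤ q) (hm : m = q + 2)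
    (hr : r = 3 ∨ r = 4 ∨ r = 5) (hs : s = m - r)
    (f0 : ℕ) (hf0 : f0 = 4 * (m - 4))
    (K : Fin s → ℕ) (hK3 : ∀ i, 3 ≤ K i)
    (hvert : f0 = (if r = 3 then 0 else if r = 4 then 2 else 5) + ∑ i, K i) :
    ∃ i, K i = 3 := by
  by_contra h
  push_neg at h
  have hK4 : ∀ i, 4 ≤ K i := fun i => by
    have := hK3 i; have := h i; omega
  have hsum : 4 * s ≤ ∑ i, K i := by
    calc 4 * s = ∑ _i : Fin s, 4 := by simp [Finset.sum_const, mul_comm]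
    _ ≤ ∑ i, K i := Finset.sum_le_sum fun i _ => hK4 i
  set S := ∑ i, K i with hS
  rcases hr with h3 | h4 | h5 <;> simp_all <;> omega
end
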